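/- Let p_n ∈ ℤ[z] be defined by p_0 = 0 and p_{n+1} = p_n^2 + z, and for ℓ, n ∈ ℕ set q_{ℓ,n} = p_{ℓ+n} − p_ℓ. For every ℓ ≥ 2 and n ≥ 1, the polynomial ( ∏_{k | gcd(n, ℓ−1)} h_k ) · ( ∏_{k | n} m_{ℓ,k} ) · q_{ℓ−1,n} divides q_{ℓ,n} in ℂ[z]. -/
import Mathlib


open Polynomial

/-- The polynomials `p n` defined by `p 0 = 0`, `p (n+1) = p n ^ 2 + X`. -/
noncomputable def P : ℕ → Polynomial ℤ
  | 0 => 0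
  | n + 1 => P n ^ 2 + X

/-- The Misiurewicz–Thurston polynomials `q l n = p (l + n) - p l`. -/
noncomputable def Q (l n : ℕ) : Polynomial ℤ := P (l + n) - P l

/-- `p n` viewed over `ℂ`. -/
noncomputable def pC (n : ℕ) : Polynomial ℂ := (P n).map (Int.castRingHom ℂ)

/-- `q l n` viewed over `ℂ`. -/
noncomputable def qC (l n : ℕ) : Polynomial ℂ := (Q l n).map (Int.castRingHom ℂ)

/-- Hyperbolic centers of order `n`: roots of `p n` that are not roots of `p k`
for any strict divisor `k` of `n`. -/
def hyp (n : ℕ) : Set ℂ :=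
  {z | (pC n).eval z = 0 ∧ ∀ k : ℕ, k ∣ n → k ≠ n → (pC k).eval z ≠ 0}

/-- Misiurewicz points of type `(l, n)`. -/
def mis (l n : ℕ) : Set ℂ :=
  {z | (qC l n).eval z = 0 ∧ (qC (l - 1) n).eval z ≠ 0 ∧
    ∀ k : ℕ, k ∣ n → k ≠ n → (qC l k).eval z ≠ 0}

/-- Gleason's polynomial `h n = ∏_{r ∈ hyp n} (X - r)`. -/
noncomputable def hPoly (n : ℕ) : Polynomial ℂ := ∏ᶠ r ∈ hyp n, (X - C r)

/-- Reduced Misiurewicz polynomial `m l n = ∏_{r ∈ mis l n} (X - r)`. -/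
noncomputable def mPoly (l n : ℕ) : Polynomial ℂ := ∏ᶠ r ∈ mis l n, (X - C r)

/-- The multiplicity `η l k = ⌊(l - 1)/k⌋ + 2`, with the conventions
`η 0 k = 1` (floor taken in `ℤ`) and `η 1 k = 2`. -/
def eta (l k : ℕ) : ℕ := if l = 0 then 1 else (l - 1) / k + 2

/-! ### Auxiliary lemmas -/

/-- Evaluation of `pC` at a point: the orbit of `0` under `w ↦ w² + z`. -/
noncomputable def ev (z : ℂ) (m : ℕ) : ℂ := (pC m).eval z

lemma ev_def (z : ℂ) (m : ℕ) : (pC m).eval z = ev z m := rfl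

lemma pC_zero : pC 0 = 0 := by simp [pC, P]

lemma pC_succ (n : ℕ) : pC (n + 1) = pC n ^ 2 + X := by
  simp [pC, P, Polynomial.map_add, Polynomial.map_pow]

lemma ev_zero (z : ℂ) : ev z 0 = 0 := by simp [ev, pC_zero]

lemma ev_succ (z : ℂ) (m : ℕ) : ev z (m + 1) = ev z m ^ 2 + z := by
  simp [ev, pC_succ]

lemma qC_eq (l n : ℕ) : qC l n = pC (l + n) - pC l := by
  simp [qC, Q, pC, Polynomial.map_sub]

lemma qC_eval (z : ℂ) (l n : ℕ) : (qC l n).eval z = ev z (l + n) - ev z l := by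
  rw [qC_eq]; simp [ev]

lemma periodA {z : ℂ} {a e : ℕ} (h : ev z (a + e) = ev z a) (d : ℕ) :
    ev z (a + d + e) = ev z (a + d) := by
  induction d with
  | zero => simpa using h
  | succ d ih =>
      have h1 : a + (d + 1) + e = (a + d + e) + 1 := by omega
      have h2 : a + (d + 1) = (a + d) + 1 := by omega
      rw [h1, h2, ev_succ, ev_succ, ih]

lemma periodB {z : ℂ} {a e : ℕ} (h : ev z (a + e) = ev z a) (t : ℕ) :
    ev z (a + t * e) = ev z a := by
  induction t with
  | zero => simp
  | succ t ih =>
      have h1 : a + (t + 1) * e = a + t * e + e := by rw [Nat.succ_mul, Nat.add_assoc]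
      rw [h1, periodA h (t * e), ih]

lemma period_gcd {z : ℂ} {a : ℕ} : ∀ k k', ev z (a + k) = ev z a →
    ev z (a + k') = ev z a → ev z (a + Nat.gcd k k') = ev z a := by
  intro k k'
  induction k, k' using Nat.gcd.induction with
  | H0 n => intro _ h; simpa using h
  | H1 m n _ ih =>
      intro h1 h2
      rw [Nat.gcd_rec]
      apply ih ?_ h1
      have hp : ev z (a + n % m + m) = ev z (a + n % m) := periodA h1 (n % m)
      have hb : ev z (a + n % m + n / m * m) = ev z (a + n % m) := periodB hp (n / m)
      have he : a + n % m + n / m * m = a + n := by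
        rw [Nat.add_assoc, Nat.mod_add_div']
      rw [he] at hb
      exact hb.symm.trans h2

/-! ### Nonvanishing -/

lemma evalP_strictMono : StrictMono fun m => (P m).eval 2 := by
  apply strictMono_nat_of_lt_succ
  intro m
  have h : (P (m + 1)).eval 2 = ((P m).eval 2) ^ 2 + 2 := by simp [P]
  nlinarith [sq_nonneg (2 * (P m).eval 2 - 1)]

lemma evalP_zero : (P 0).eval 2 = 0 := by simp [P]

lemma evalP_nonneg (m : ℕ) : 0 ≤ (P m).eval 2 := by
  have := evalP_strictMono.monotone (Nat.zero_le m)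
  simpa [evalP_zero] using this

lemma pC_ne_zero {m : ℕ} (hm : 1 ≤ m) : pC m ≠ 0 := by
  rw [pC, Ne, Polynomial.map_eq_zero_iff Int.cast_injective]
  intro h
  have h2 : (P 0).eval 2 < (P m).eval 2 := evalP_strictMono hm
  rw [h, evalP_zero] at h2
  simp at h2

lemma qC_ne_zero {l n : ℕ} (hn : 1 ≤ n) : qC l n ≠ 0 := by
  rw [qC, Ne, Polynomial.map_eq_zero_iff Int.cast_injective]
  intro h
  have h2 : (P l).eval 2 < (P (l + n)).eval 2 := evalP_strictMono (by omega)
  rw [Q, sub_eq_zero] at h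
  rw [h] at h2
  exact lt_irrefl _ h2

lemma hyp_finite {k : ℕ} (hk : 1 ≤ k) : (hyp k).Finite := by
  apply Set.Finite.subset (Polynomial.finite_setOf_isRoot (pC_ne_zero hk))
  intro z hz
  exact hz.1

lemma mis_finite {l k : ℕ} (hk : 1 ≤ k) : (mis l k).Finite := by
  apply Set.Finite.subset (Polynomial.finite_setOf_isRoot (qC_ne_zero (l := l) hk))
  intro z hz
  exact hz.1

open Classical in
noncomputable def hFin (k : ℕ) : Finset ℂ :=
  if h : (hyp k).Finite then h.toFinset else ∅

open Classical in
noncomputable def mFin (l k : ℕ) : Finset ℂ :=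
  if h : (mis l k).Finite then h.toFinset else ∅

lemma mem_hFin {k : ℕ} (hk : 1 ≤ k) {r : ℂ} : r ∈ hFin k ↔ r ∈ hyp k := by
  rw [hFin, dif_pos (hyp_finite hk), Set.Finite.mem_toFinset]

lemma mem_mFin {l k : ℕ} (hk : 1 ≤ k) {r : ℂ} : r ∈ mFin l k ↔ r ∈ mis l k := by
  rw [mFin, dif_pos (mis_finite hk), Set.Finite.mem_toFinset]

lemma hPoly_eq {k : ℕ} (hk : 1 ≤ k) : hPoly k = ∏ r ∈ hFin k, (X - C r) := by
  rw [hPoly, hFin, dif_pos (hyp_finite hk), ← finprod_mem_coe_finset,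
    Set.Finite.coe_toFinset]

lemma mPoly_eq {l k : ℕ} (hk : 1 ≤ k) : mPoly l k = ∏ r ∈ mFin l k, (X - C r) := by
  rw [mPoly, mFin, dif_pos (mis_finite hk), ← finprod_mem_coe_finset,
    Set.Finite.coe_toFinset]

lemma finset_prod_X_sub_C_dvd {s : Polynomial ℂ} (hs : s ≠ 0) (T : Finset ℂ)
    (h : ∀ r ∈ T, s.eval r = 0) : (∏ r ∈ T, (X - C r)) ∣ s := by
  classical
  have hle : T.val ≤ s.roots := by
    rw [Multiset.le_iff_count]
    intro a
    by_cases ha : a ∈ T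
    · rw [Multiset.count_eq_one_of_mem T.nodup ha, Polynomial.count_roots]
      exact (Polynomial.rootMultiplicity_pos hs).mpr (h a ha)
    · rw [Multiset.count_eq_zero_of_notMem (by simpa using ha)]
      exact Nat.zero_le _
  calc (∏ r ∈ T, (X - C r)) = (T.val.map fun r => X - C r).prod := rfl
    _ ∣ (s.roots.map fun r => X - C r).prod :=
        Multiset.prod_dvd_prod_of_le (Multiset.map_le_map hle)
    _ ∣ s := Polynomial.prod_multiset_X_sub_C_dvd s

/-! ### Dynamics of roots -/

lemma hyp_period0 {z : ℂ} {k : ℕ} (hz : z ∈ hyp k) : ev z (0 + k) = ev z 0 := by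
  have h1 : ev z k = 0 := hz.1
  simp [ev_zero, h1]

lemma hyp_disjoint {k k' : ℕ} (_hk : 1 ≤ k) (_hk' : 1 ≤ k') (hne : k ≠ k') {z : ℂ}
    (h1 : z ∈ hyp k) (h2 : z ∈ hyp k') : False := by
  have pg := period_gcd k k' (hyp_period0 h1) (hyp_period0 h2)
  have hg0 : ev z (Nat.gcd k k') = 0 := by simpa [ev_zero] using pg
  rcases eq_or_ne (Nat.gcd k k') k with h | h
  · exact h2.2 k (h ▸ Nat.gcd_dvd_right k k') hne h1.1
  · exact h1.2 (Nat.gcd k k') (Nat.gcd_dvd_left k k') h hg0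

lemma mis_disjoint {l k k' : ℕ} (hne : k ≠ k') {z : ℂ}
    (h1 : z ∈ mis l k) (h2 : z ∈ mis l k') : False := by
  have p1 : ev z (l + k) = ev z l := by
    have := h1.1; rw [qC_eval, sub_eq_zero] at this; exact this
  have p2 : ev z (l + k') = ev z l := by
    have := h2.1; rw [qC_eval, sub_eq_zero] at this; exact this
  have pg := period_gcd k k' p1 p2
  rcases eq_or_ne (Nat.gcd k k') k with h | h
  · exact h2.2.2 k (h ▸ Nat.gcd_dvd_right k k') hne
      (by rw [qC_eval]; exact sub_eq_zero.mpr p1)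
  · exact h1.2.2 (Nat.gcd k k') (Nat.gcd_dvd_left k k') h
      (by rw [qC_eval]; exact sub_eq_zero.mpr pg)

lemma hyp_mis_disjoint {m k k' : ℕ} (hm : 1 ≤ m) (hkm : k ∣ m) {z : ℂ}
    (h1 : z ∈ hyp k) (h2 : z ∈ mis (m + 1) k') : False := by
  have hp0 : ev z (0 + k) = ev z 0 := hyp_period0 h1
  obtain ⟨t, ht⟩ := hkm
  have hf : ev z (m + 1 + k') = ev z (m + 1) := by
    have := h2.1; rw [qC_eval, sub_eq_zero] at this; exact this
  have q1 : ev z (1 + t * k) = ev z 1 :=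
    periodB (by simpa using periodA hp0 1) t
  have q2 : ev z (1 + k' + t * k) = ev z (1 + k') :=
    periodB (by simpa using periodA hp0 (1 + k')) t
  have e1 : m + 1 = 1 + t * k := by rw [ht]; ring
  have e2 : m + 1 + k' = 1 + k' + t * k := by rw [ht]; ring
  rw [e2, e1, q2, q1] at hf
  -- hf : ev z (1 + k') = ev z 1 ; period k' from base 1
  have hk' : ev z (m + k') = ev z m := by
    have := periodA hf (m - 1)
    rwa [show 1 + (m - 1) = m by omega] at this
  have := h2.2.1
  rw [show m + 1 - 1 = m from rfl, qC_eval] at this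
  exact this (sub_eq_zero.mpr hk')

lemma hyp_root {m n k : ℕ} (hkm : k ∣ m) (hkn : k ∣ n) {z : ℂ} (h1 : z ∈ hyp k) :
    ev z (m + n) + ev z m = 0 := by
  have hp0 : ev z (0 + k) = ev z 0 := hyp_period0 h1
  obtain ⟨t, ht⟩ := hkm
  obtain ⟨s, hs⟩ := hkn
  have e1 : ev z m = 0 := by
    have := periodB hp0 t
    rw [show 0 + t * k = m by rw [ht]; ring] at this
    simpa [ev_zero] using this
  have e2 : ev z (m + n) = 0 := by
    have := periodB hp0 (t + s)
    rw [show 0 + (t + s) * k = m + n by rw [ht, hs]; ring] at this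
    simpa [ev_zero] using this
  rw [e1, e2, add_zero]

lemma mis_root {m n k : ℕ} (hn : 1 ≤ n) (hkn : k ∣ n) {z : ℂ}
    (h2 : z ∈ mis (m + 1) k) : ev z (m + n) + ev z m = 0 := by
  have hf : ev z (m + 1 + k) = ev z (m + 1) := by
    have := h2.1; rw [qC_eval, sub_eq_zero] at this; exact this
  obtain ⟨s, hs⟩ := hkn
  have h3 : ev z (m + 1 + n) = ev z (m + 1) := by
    have := periodB hf s
    rwa [show m + 1 + s * k = m + 1 + n by rw [hs]; ring] at this
  have hne : ev z (m + n) ≠ ev z m := by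
    intro hEq
    have hA : ev z (m + n + k) = ev z (m + n) := by
      have := periodA hf (n - 1)
      rwa [show m + 1 + (n - 1) = m + n by omega] at this
    have hB : ev z (m + k + n) = ev z (m + k) := periodA hEq k
    have hmk : ev z (m + k) = ev z m := by
      rw [← hB, show m + k + n = m + n + k by ring, hA, hEq]
    have := h2.2.1
    rw [show m + 1 - 1 = m from rfl, qC_eval] at this
    exact this (sub_eq_zero.mpr hmk)
  rw [show m + 1 + n = (m + n) + 1 by ring, show (m : ℕ) + 1 = m + 1 from rfl,
    ev_succ, ev_succ] at h3
  have hsq : (ev z (m + n) - ev z m) * (ev z (m + n) + ev z m) = 0 := by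
    ring_nf
    linear_combination h3
  rcases mul_eq_zero.mp hsq with h | h
  · exact absurd (sub_eq_zero.mp h) hne
  · exact h

lemma Q_factor (m n : ℕ) : Q (m + 1) n = Q m n * (P (m + n) + P m) := by
  have h : m + 1 + n = (m + n) + 1 := by omega
  rw [Q, Q, h]
  have e1 : P ((m + n) + 1) = P (m + n) ^ 2 + X := by simp [P]
  have e2 : P (m + 1) = P m ^ 2 + X := by simp [P]
  rw [e1, e2]
  ring

/-- The divisibility step in the proof of the factorization theorem. -/
theorem divisibility_step (l n : ℕ) (hl : 2 ≤ l) (hn : 1 ≤ n) :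
    (∏ k ∈ (Nat.gcd n (l - 1)).divisors, hPoly k) * (∏ k ∈ n.divisors, mPoly l k) *
        qC (l - 1) n ∣
      qC l n := by
  obtain ⟨m, rfl⟩ : ∃ m, l = m + 1 := ⟨l - 1, by omega⟩
  have hm : 1 ≤ m := by omega
  simp only [Nat.add_sub_cancel]
  have hfact : qC (m + 1) n = qC m n * ((P (m + n) + P m).map (Int.castRingHom ℂ)) := by
    rw [qC, Q_factor, Polynomial.map_mul]; rfl
  set sC : Polynomial ℂ := (P (m + n) + P m).map (Int.castRingHom ℂ) with hsC
  rw [hfact, mul_comm (qC m n) sC]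
  apply mul_dvd_mul_right
  -- sC is nonzero
  have hsC_ne : sC ≠ 0 := by
    intro h
    have he : ((P (m + n) + P m).map (Int.castRingHom ℂ)).eval 2 = 0 := by
      rw [← hsC, h]; simp
    rw [Polynomial.eval_map] at he
    have he' : ((P (m + n)).eval 2 + (P m).eval 2 : ℤ) = (0 : ℤ) := by
      have : (((P (m + n)).eval 2 + (P m).eval 2 : ℤ) : ℂ) = 0 := by
        simpa [Polynomial.eval₂_add] using he
      exact_mod_cast this
    have h1 : 0 < (P (m + n)).eval 2 := by
      have := evalP_strictMono (show 0 < m + n by omega)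
      simpa [evalP_zero] using this
    have h2 := evalP_nonneg m
    omega
  have hsC_eval : ∀ z : ℂ, sC.eval z = ev z (m + n) + ev z m := by
    intro z
    rw [hsC, Polynomial.map_add]
    simp [ev, pC]
  have hD1 : ∀ k ∈ (Nat.gcd n m).divisors, k ∣ n ∧ k ∣ m ∧ 1 ≤ k := by
    intro k hk
    rw [Nat.mem_divisors] at hk
    exact ⟨hk.1.trans (Nat.gcd_dvd_left _ _), hk.1.trans (Nat.gcd_dvd_right _ _),
      Nat.pos_of_dvd_of_pos hk.1 (Nat.pos_of_ne_zero hk.2)⟩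
  have hD2 : ∀ k ∈ n.divisors, k ∣ n ∧ 1 ≤ k := by
    intro k hk
    rw [Nat.mem_divisors] at hk
    exact ⟨hk.1, Nat.pos_of_dvd_of_pos hk.1 (Nat.pos_of_ne_zero hk.2)⟩
  have hA : ∏ k ∈ (Nat.gcd n m).divisors, hPoly k
      = ∏ k ∈ (Nat.gcd n m).divisors, ∏ r ∈ hFin k, (X - C r) :=
    Finset.prod_congr rfl fun k hk => hPoly_eq (hD1 k hk).2.2
  have hB : ∏ k ∈ n.divisors, mPoly (m + 1) k
      = ∏ k ∈ n.divisors, ∏ r ∈ mFin (m + 1) k, (X - C r) :=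
    Finset.prod_congr rfl fun k hk => mPoly_eq (hD2 k hk).2
  have hdisj1 : (↑(Nat.gcd n m).divisors : Set ℕ).PairwiseDisjoint hFin := by
    intro k hk k' hk' hne
    simp only [Function.onFun]
    rw [Finset.disjoint_left]
    intro r hr hr'
    simp only [Finset.mem_coe] at hk hk'
    exact hyp_disjoint (hD1 _ hk).2.2 (hD1 _ hk').2.2 hne
      ((mem_hFin (hD1 _ hk).2.2).mp hr) ((mem_hFin (hD1 _ hk').2.2).mp hr')
  have hdisj2 : (↑n.divisors : Set ℕ).PairwiseDisjoint (mFin (m + 1)) := by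
    intro k hk k' hk' hne
    simp only [Function.onFun]
    rw [Finset.disjoint_left]
    intro r hr hr'
    simp only [Finset.mem_coe] at hk hk'
    exact mis_disjoint hne
      ((mem_mFin (hD2 _ hk).2).mp hr) ((mem_mFin (hD2 _ hk').2).mp hr')
  rw [hA, hB, ← Finset.prod_biUnion hdisj1, ← Finset.prod_biUnion hdisj2]
  have hdisjT : Disjoint ((Nat.gcd n m).divisors.biUnion hFin)
      (n.divisors.biUnion (mFin (m + 1))) := by
    rw [Finset.disjoint_left]
    intro r hr hr'
    rw [Finset.mem_biUnion] at hr hr'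
    obtain ⟨k, hk, hrk⟩ := hr
    obtain ⟨k', hk', hrk'⟩ := hr'
    exact hyp_mis_disjoint hm (hD1 k hk).2.1
      ((mem_hFin (hD1 k hk).2.2).mp hrk) ((mem_mFin (hD2 k' hk').2).mp hrk')
  rw [← Finset.prod_union hdisjT]
  apply finset_prod_X_sub_C_dvd hsC_ne
  intro r hr
  rw [Finset.mem_union] at hr
  rw [hsC_eval]
  rcases hr with hr | hr
  · rw [Finset.mem_biUnion] at hr
    obtain ⟨k, hk, hrk⟩ := hr
    exact hyp_root (hD1 k hk).2.1 (hD1 k hk).1 ((mem_hFin (hD1 k hk).2.2).mp hrk)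
  · rw [Finset.mem_biUnion] at hr
    obtain ⟨k, hk, hrk⟩ := hr
    exact mis_root hn (hD2 k hk).1 ((mem_mFin (hD2 k hk).2).mp hrk)
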